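/- arXiv:1108.1984 — 2 statements merged into one kernel-verified Lean document; each statement's English description precedes it below -/
import Mathlib

section
/- For α = β/2, if u : ℝ → ℝ is a smooth solution of the stationary extended Swift-Hohenberg equation 0 = r u - (1+∂_xx)^2 u + b u^2 - u^3 + α(u')^2 + β u u'', then there exists a first integral: the quantity H(x) = -(1/2)(r-1)u^2 + (u')^2 - (1/2)(u'')^2 + u' u''' - (b/3)u^3 + (1/4)u^4 - (β/2) u (u')^2 is constant in x. -/
theorem extsh_conservative_first_integral (r b α β : ℝ) (hαβ : α = β / 2) (u : ℝ → ℝ)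
    (hu : ContDiff ℝ (⊤ : ℕ∞) u)
    (heq : ∀ x, (0:ℝ) = r * u x
      - (u x + 2 * iteratedDeriv 2 u x + iteratedDeriv 4 u x)
      + b * (u x) ^ 2 - (u x) ^ 3
      + α * (deriv u x) ^ 2 + β * u x * iteratedDeriv 2 u x) :
    ∀ x, deriv (fun y =>
      -(1 / 2) * (r - 1) * (u y) ^ 2 + (deriv u y) ^ 2
        - (1 / 2) * (iteratedDeriv 2 u y) ^ 2 + deriv u y * iteratedDeriv 3 u y
        - (b / 3) * (u y) ^ 3 + (1 / 4) * (u y) ^ 4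
        - (β / 2) * u y * (deriv u y) ^ 2) x = 0 := by
  intro x
  have hD : ∀ n : ℕ, Differentiable ℝ (iteratedDeriv n u) := fun n =>
    hu.differentiable_iteratedDeriv n (by exact_mod_cast ENat.natCast_lt_top n)
  have key : ∀ n : ℕ, ∀ y : ℝ,
      HasDerivAt (iteratedDeriv n u) (iteratedDeriv (n + 1) u y) y := by
    intro n y
    have := ((hD n) y).hasDerivAt
    rwa [← iteratedDeriv_succ] at this
  have h1 : HasDerivAt u (deriv u x) x := (hu.differentiable (by simp) x).hasDerivAt
  have h2 : HasDerivAt (deriv u) (iteratedDeriv 2 u x) x := by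
    have := key 1 x
    rwa [iteratedDeriv_one] at this
  have h3 : HasDerivAt (iteratedDeriv 2 u) (iteratedDeriv 3 u x) x := key 2 x
  have h4 : HasDerivAt (iteratedDeriv 3 u) (iteratedDeriv 4 u x) x := key 3 x
  have hA1 := (h1.pow 2).const_mul (-(1 / 2) * (r - 1))
  have hA2 := hA1.add (h2.pow 2)
  have hA3 := hA2.sub ((h3.pow 2).const_mul (1 / 2))
  have hA4 := hA3.add (h2.mul h4)
  have hA5 := hA4.sub ((h1.pow 3).const_mul (b / 3))
  have hA6 := hA5.add ((h1.pow 4).const_mul (1 / 4))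
  have hH := hA6.sub ((h1.const_mul (β / 2)).mul (h2.pow 2))
  refine hH.deriv.trans ?_
  have he := heq x
  subst hαβ
  push_cast [Pi.pow_apply]
  linear_combination (deriv u x) * he
end

section
/- For the usual Swift-Hohenberg equation (α = β = 0) at the codimension-two point b^2 = 27/38, the normal-form coefficient q_4 computed from the reduction equals 2202/361; in particular q_4 > 0. -/
noncomputable section

def b0 : ℝ := Real.sqrt (27 / 38)
def c1 : ℝ := 2 * b0
def c2 : ℝ := b0 / 9
def c3 : ℝ := (2 * b0 * c2 - 1) / 64
def c4 : ℝ := b0 * (c1 ^ 2 + 2 * c2 ^ 2) - 6 * (c1 + c2)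
def c5 : ℝ := 0
def c6 : ℝ := (1 / 9) * (2 * c1 * c2 * b0 + 2 * c3 * b0 - 3 * (c1 + 2 * c2))
def c7 : ℝ := (2 / 9) * (24 * c2)
def c8 : ℝ := 2 * b0 * c7
def c9 : ℝ := 0
def c10 : ℝ := b0 * (2 * c4 + 2 * c6 + 2 * c2 * c3)
  - 3 * (c1 ^ 2 + c3 + 2 * c1 * c2 + 2 * c2 ^ 2)
def q4 : ℝ := (1 / 256) * (-3 * c8 ^ 2 + 2 * c8 * c9 + 5 * c9 ^ 2) - (1 / 4) * c10

theorem q4_usual_SH_at_codim2 : q4 = 2202 / 361 ∧ 0 < q4 := by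
  have hb : b0 ^ 2 = 27 / 38 := by
    rw [b0, sq, Real.mul_self_sqrt (by norm_num)]
  have h : q4 = 2202 / 361 := by
    simp only [q4, c10, c9, c8, c7, c6, c4, c3, c2, c1]
    linear_combination (62755/7296 - 31945/15552 * b0 ^ 2) * hb
  exact ⟨h, by rw [h]; norm_num⟩

end
end
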